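/- arXiv:1810.06243 — 2 statements merged into one kernel-verified Lean document; each statement's English description precedes it below -/
import Mathlib

section
/- Let M_ε and M_μ be symmetric positive definite real matrices of sizes n×n and m×m respectively, and C an m×n real matrix. If e : ℝ → ℝⁿ and h : ℝ → ℝᵐ are differentiable and satisfy M_ε e'(t) = Cᵀ h(t) and M_μ h'(t) = −C e(t) for all t, then the discrete energy E(t) := ⟨M_ε e(t), e(t)⟩ + ⟨M_μ h(t), h(t)⟩ is constant in time. -/
/-!
Differentiating the energy gives `2⟨M_ε e', e⟩ + 2⟨M_μ h', h⟩` by symmetry of the mass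
matrices, which the equations turn into `2⟨Cᵀ h, e⟩ - 2⟨C e, h⟩ = 0`; a function with
vanishing derivative on `ℝ` is constant.
-/

open Matrix

section Derivatives

variable {𝕜 ι κ : Type*} [NontriviallyNormedField 𝕜] [Fintype ι] {t : 𝕜}

theorem HasDerivAt.dotProduct {u v : 𝕜 → ι → 𝕜} {u' v' : ι → 𝕜}
    (hu : HasDerivAt u u' t) (hv : HasDerivAt v v' t) :
    HasDerivAt (fun s => u s ⬝ᵥ v s) (u' ⬝ᵥ v t + u t ⬝ᵥ v') t := by
  have hterm (i : ι) : HasDerivAt (fun s => u s i * v s i) (u' i * v t i + u t i * v' i) t :=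
    (hasDerivAt_pi.mp hu i).mul (hasDerivAt_pi.mp hv i)
  exact (HasDerivAt.fun_sum fun i (_ : i ∈ Finset.univ) => hterm i).congr_deriv
    Finset.sum_add_distrib

theorem HasDerivAt.matrix_mulVec (A : Matrix κ ι 𝕜) {u : 𝕜 → ι → 𝕜} {u' : ι → 𝕜}
    (hu : HasDerivAt u u' t) : HasDerivAt (fun s => A *ᵥ u s) (A *ᵥ u') t :=
  hasDerivAt_pi.mpr fun i => ((hasDerivAt_const t (A i)).dotProduct hu).congr_deriv
    (by rw [zero_dotProduct, zero_add]; rfl)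

theorem Matrix.IsSymm.mulVec_dotProduct_comm {A : Matrix ι ι 𝕜} (hA : A.IsSymm) (x y : ι → 𝕜) :
    A *ᵥ x ⬝ᵥ y = A *ᵥ y ⬝ᵥ x := by
  rw [dotProduct_comm, ← dotProduct_transpose_mulVec, hA.eq, dotProduct_comm]

theorem Matrix.IsSymm.hasDerivAt_mulVec_dotProduct_self {A : Matrix ι ι 𝕜} (hA : A.IsSymm)
    {u : 𝕜 → ι → 𝕜} {u' : ι → 𝕜} (hu : HasDerivAt u u' t) :
    HasDerivAt (fun s => A *ᵥ u s ⬝ᵥ u s) (2 * (A *ᵥ u' ⬝ᵥ u t)) t := by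
  refine ((hu.matrix_mulVec A).dotProduct hu).congr_deriv ?_
  rw [hA.mulVec_dotProduct_comm (u t), two_mul]

end Derivatives

theorem hasDerivAt_maxwell_energy {ι κ : Type*} [Fintype ι] [Fintype κ]
    {Mε : Matrix ι ι ℝ} {Mμ : Matrix κ κ ℝ} (hMε : Mε.IsSymm) (hMμ : Mμ.IsSymm)
    (C : Matrix κ ι ℝ) {e : ℝ → ι → ℝ} {h : ℝ → κ → ℝ} {e' : ι → ℝ} {h' : κ → ℝ} {t : ℝ}
    (he : HasDerivAt e e' t) (hh : HasDerivAt h h' t)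
    (heq1 : Mε *ᵥ e' = Cᵀ *ᵥ h t) (heq2 : Mμ *ᵥ h' = -(C *ᵥ e t)) :
    HasDerivAt (fun s => Mε *ᵥ e s ⬝ᵥ e s + Mμ *ᵥ h s ⬝ᵥ h s) 0 t := by
  refine ((hMε.hasDerivAt_mulVec_dotProduct_self he).add
    (hMμ.hasDerivAt_mulVec_dotProduct_self hh)).congr_deriv ?_
  rw [heq1, heq2, mulVec_transpose, ← dotProduct_mulVec, dotProduct_comm (h t), neg_dotProduct]
  ring

theorem stmt3 (n m : ℕ)
    (Mε : Matrix (Fin n) (Fin n) ℝ) (Mμ : Matrix (Fin m) (Fin m) ℝ)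
    (hMε : Mε.PosDef) (hMμ : Mμ.PosDef)
    (C : Matrix (Fin m) (Fin n) ℝ)
    (e : ℝ → Fin n → ℝ) (h : ℝ → Fin m → ℝ)
    (he : Differentiable ℝ e) (hh : Differentiable ℝ h)
    (heq1 : ∀ t, Mε.mulVec (deriv e t) = Cᵀ.mulVec (h t))
    (heq2 : ∀ t, Mμ.mulVec (deriv h t) = -C.mulVec (e t)) :
    ∀ s t : ℝ,
      (Mε.mulVec (e s)) ⬝ᵥ (e s) + (Mμ.mulVec (h s)) ⬝ᵥ (h s) =
      (Mε.mulVec (e t)) ⬝ᵥ (e t) + (Mμ.mulVec (h t)) ⬝ᵥ (h t) := by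
  have hE (t : ℝ) := hasDerivAt_maxwell_energy (isHermitian_iff_isSymm.mp hMε.isHermitian)
    (isHermitian_iff_isSymm.mp hMμ.isHermitian) C (he t).hasDerivAt (hh t).hasDerivAt
    (heq1 t) (heq2 t)
  exact is_const_of_deriv_eq_zero (fun t => (hE t).differentiableAt) fun t => (hE t).deriv
end

section
/- Let M̃ ∈ ℝ^{2n×2n} and M_μ ∈ ℝ^{m×m} be symmetric positive definite, C ∈ ℝ^{m×n}, P ∈ ℝ^{n×2n} with P_{ij}=1/2 for j=i or j=i+n and 0 otherwise, and set C̃ := C·P and M⁻¹ := P·M̃⁻¹·Pᵀ. If ẽ : ℝ → ℝ^{2n} and h̃ : ℝ → ℝᵐ are differentiable and satisfy M̃ ẽ'(t) = C̃ᵀ h̃(t) and M_μ h̃'(t) = −C̃ ẽ(t) for all t, then e(t) := P ẽ(t) and h(t) := h̃(t) satisfy e'(t) = M⁻¹ Cᵀ h(t) and M_μ h'(t) = −C e(t) for all t. -/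
/- Since C̃ = C P, the enriched equation M̃ ẽ' = Pᵀ Cᵀ h̃ gives ẽ' = M̃⁻¹ Pᵀ Cᵀ h̃, and applying the
constant matrix P (which commutes with d/dt) yields e' = P M̃⁻¹ Pᵀ Cᵀ h. The second equation is
just C̃ ẽ = C (P ẽ). -/

open Matrix

/-- The averaging matrix P ∈ ℝ^{n×2n} with P_{ij} = 1/2 if j = i or j = i+n. -/
noncomputable def avgP (n : ℕ) : Matrix (Fin n) (Fin n ⊕ Fin n) ℝ :=
  fun i j => if j = Sum.inl i ∨ j = Sum.inr i then (1 : ℝ) / 2 else 0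

section Derivative

variable {𝕜 ι κ : Type*} [NontriviallyNormedField 𝕜] [CompleteSpace 𝕜] [Fintype ι] [Fintype κ]

theorem Matrix.hasDerivAt_mulVec (A : Matrix κ ι 𝕜) {f : 𝕜 → ι → 𝕜} {f' : ι → 𝕜} {t : 𝕜}
    (hf : HasDerivAt f f' t) :
    HasDerivAt (fun s => A *ᵥ f s) (A *ᵥ f') t :=
  A.mulVecLin.toContinuousLinearMap.hasFDerivAt.comp_hasDerivAt t hf

theorem Matrix.deriv_mulVec (A : Matrix κ ι 𝕜) {f : 𝕜 → ι → 𝕜} {t : 𝕜}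
    (hf : DifferentiableAt 𝕜 f t) :
    deriv (fun s => A *ᵥ f s) t = A *ᵥ deriv f t :=
  (A.hasDerivAt_mulVec hf.hasDerivAt).deriv

end Derivative

theorem Matrix.mulVec_eq_mul_inv_mul_transpose_mulVec {R ι κ μ : Type*} [CommRing R]
    [Fintype ι] [DecidableEq ι] [Fintype κ] [Fintype μ]
    {M : Matrix ι ι R} (hM : IsUnit M) (C : Matrix μ κ R) (P : Matrix κ ι R)
    {x : ι → R} {y : μ → R} (hx : M *ᵥ x = (C * P)ᵀ *ᵥ y) :
    P *ᵥ x = (P * M⁻¹ * Pᵀ) *ᵥ (Cᵀ *ᵥ y) := by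
  calc P *ᵥ x = P *ᵥ (M⁻¹ *ᵥ (M *ᵥ x)) := by
        rw [mulVec_mulVec (M := M⁻¹), nonsing_inv_mul _ ((isUnit_iff_isUnit_det M).mp hM),
          one_mulVec]
    _ = (P * M⁻¹ * Pᵀ) *ᵥ (Cᵀ *ᵥ y) := by
        rw [hx, transpose_mul]
        simp only [mulVec_mulVec, Matrix.mul_assoc]

theorem stmt4_general (n m : ℕ)
    (Mt : Matrix (Fin n ⊕ Fin n) (Fin n ⊕ Fin n) ℝ)
    (Mμ : Matrix (Fin m) (Fin m) ℝ)
    (hMt : Mt.PosDef)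
    (C : Matrix (Fin m) (Fin n) ℝ)
    (et : ℝ → (Fin n ⊕ Fin n) → ℝ) (ht : ℝ → Fin m → ℝ)
    (het : Differentiable ℝ et)
    (heq1 : ∀ t, Mt.mulVec (deriv et t) = (C * avgP n)ᵀ.mulVec (ht t))
    (heq2 : ∀ t, Mμ.mulVec (deriv ht t) = -(C * avgP n).mulVec (et t)) :
    (∀ t, deriv (fun s => (avgP n).mulVec (et s)) t =
        (avgP n * Mt⁻¹ * (avgP n)ᵀ).mulVec (Cᵀ.mulVec (ht t))) ∧
      (∀ t, Mμ.mulVec (deriv ht t) = -C.mulVec ((avgP n).mulVec (et t))) := by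
  refine ⟨fun t => ?_, fun t => ?_⟩
  · rw [(avgP n).deriv_mulVec (het t)]
    exact mulVec_eq_mul_inv_mul_transpose_mulVec hMt.isUnit C (avgP n) (heq1 t)
  · rw [heq2 t, mulVec_mulVec]

theorem stmt4 (n m : ℕ)
    (Mt : Matrix (Fin n ⊕ Fin n) (Fin n ⊕ Fin n) ℝ)
    (Mμ : Matrix (Fin m) (Fin m) ℝ)
    (hMt : Mt.PosDef) (hMμ : Mμ.PosDef)
    (C : Matrix (Fin m) (Fin n) ℝ)
    (et : ℝ → (Fin n ⊕ Fin n) → ℝ) (ht : ℝ → Fin m → ℝ)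
    (het : Differentiable ℝ et) (hht : Differentiable ℝ ht)
    (heq1 : ∀ t, Mt.mulVec (deriv et t) = (C * avgP n)ᵀ.mulVec (ht t))
    (heq2 : ∀ t, Mμ.mulVec (deriv ht t) = -(C * avgP n).mulVec (et t)) :
    (∀ t, deriv (fun s => (avgP n).mulVec (et s)) t =
        (avgP n * Mt⁻¹ * (avgP n)ᵀ).mulVec (Cᵀ.mulVec (ht t))) ∧
      (∀ t, Mμ.mulVec (deriv ht t) = -C.mulVec ((avgP n).mulVec (et t))) :=
  stmt4_general n m Mt Mμ hMt C et ht het heq1 heq2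
end
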